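/- arXiv:2207.08705 — 2 statements merged into one kernel-verified Lean document; each statement's English description precedes it below -/
import Mathlib

section
/- Let ω ∈ ℝ be such that e^{2πiω} ≠ 1, and let u : ℝ → ℂ be a continuously differentiable 2π-periodic function. Then for every t ∈ ℝ, |u(t)| ≤ (2π/|e^{2πiω} − 1|)·sup_{s ∈ [0,2π]} |u'(s) + iω·u(s)|. -/
/-!
Multiplying by the integrating factor `e^{iωs}` turns the twisted derivative `u' + iωu` into the
ordinary derivative of `v = e^{iωs} u`. Periodicity of `u` gives `v(t + 2π) = e^{2πiω} v(t)`, so the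
fundamental theorem of calculus over one period yields
`(e^{2πiω} - 1) v(t) = ∫_t^{t+2π} e^{iωs} (u' + iωu)(s) ds`; since `|v| = |u|`, the estimate follows.
-/

open Complex Set

theorem Function.Periodic.deriv {𝕜 F : Type*} [NontriviallyNormedField 𝕜] [NormedAddCommGroup F]
    [NormedSpace 𝕜 F] {f : 𝕜 → F} {c : 𝕜} (h : Function.Periodic f c) :
    Function.Periodic (_root_.deriv f) c := fun x => by
  rw [← deriv_comp_add_const, show (fun y => f (y + c)) = f from funext h]

theorem Function.Periodic.le_iSup_Icc {g : ℝ → ℝ} {T : ℝ} (hg : Continuous g)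
    (hper : Function.Periodic g T) (hT : 0 < T) (s : ℝ) :
    g s ≤ ⨆ x : Icc (0 : ℝ) T, g x := by
  have hbdd : BddAbove (range fun x : Icc (0 : ℝ) T => g x) := by
    rw [← image_eq_range]
    exact (isCompact_Icc.image_of_continuousOn hg.continuousOn).bddAbove
  obtain ⟨y, hy, hys⟩ := hper.exists_mem_Ico₀ hT s
  rw [hys]
  exact le_ciSup hbdd ⟨y, Ico_subset_Icc_self hy⟩

theorem hasDerivAt_exp_mul_mul {u : ℝ → ℂ} {u' c : ℂ} {s : ℝ} (hu : HasDerivAt u u' s) :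
    HasDerivAt (fun x : ℝ => exp (c * x) * u x) (exp (c * s) * (u' + c * u s)) s := by
  have hexp : HasDerivAt (fun x : ℝ => exp (c * x)) (exp (c * s) * c) s := by
    simpa using ((hasDerivAt_id s).ofReal_comp.const_mul c).cexp
  exact (hexp.fun_mul hu).congr_deriv (by ring)

theorem exp_sub_one_mul_eq_integral {u : ℝ → ℂ} {T : ℝ} (c : ℂ) (hu : ContDiff ℝ 1 u)
    (hper : Function.Periodic u T) (t : ℝ) :
    (exp (c * T) - 1) * (exp (c * t) * u t) =
      ∫ s in t..t + T, exp (c * s) * (deriv u s + c * u s) := by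
  have hderiv : ∀ s, HasDerivAt u (deriv u s) s := fun s =>
    (hu.differentiable one_ne_zero s).hasDerivAt
  have hcont : Continuous fun s : ℝ => exp (c * s) * (deriv u s + c * u s) := by
    have := hu.continuous_deriv le_rfl
    have := hu.continuous
    fun_prop
  rw [intervalIntegral.integral_eq_sub_of_hasDerivAt (fun s _ => hasDerivAt_exp_mul_mul (hderiv s))
    (hcont.intervalIntegrable _ _), hper t]
  push_cast
  rw [mul_add, exp_add]
  ring

theorem norm_le_div_mul_iSup_norm_deriv_add_I_mul {u : ℝ → ℂ} {T ω : ℝ} (hT : 0 < T)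
    (hω : exp (I * ω * T) ≠ 1) (hu : ContDiff ℝ 1 u) (hper : Function.Periodic u T) (t : ℝ) :
    ‖u t‖ ≤ T / ‖exp (I * ω * T) - 1‖ * ⨆ s : Icc (0 : ℝ) T, ‖deriv u s + I * ω * u s‖ := by
  set M := ⨆ s : Icc (0 : ℝ) T, ‖deriv u s + I * ω * u s‖
  have hbound : ∀ s : ℝ, ‖deriv u s + I * ω * u s‖ ≤ M := by
    refine Function.Periodic.le_iSup_Icc ?_ ?_ hT
    · have := hu.continuous_deriv le_rfl
      have := hu.continuous
      fun_prop
    · intro s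
      simp only [hper.deriv s, hper s]
  have hnorm_exp : ∀ s : ℝ, ‖exp (I * ω * s)‖ = 1 := fun s => by
    rw [norm_exp]
    simp
  have hintegral : ‖exp (I * ω * T) - 1‖ * ‖u t‖ ≤ M * T := by
    calc ‖exp (I * ω * T) - 1‖ * ‖u t‖
        = ‖(exp (I * ω * T) - 1) * (exp (I * ω * t) * u t)‖ := by
          rw [norm_mul, norm_mul, hnorm_exp, one_mul]
      _ = ‖∫ s in t..t + T, exp (I * ω * s) * (deriv u s + I * ω * u s)‖ := by
          rw [exp_sub_one_mul_eq_integral _ hu hper]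
      _ ≤ M * |t + T - t| := intervalIntegral.norm_integral_le_of_norm_le_const fun s _ => by
          rw [norm_mul, hnorm_exp, one_mul]
          exact hbound s
      _ = M * T := by rw [add_sub_cancel_left, abs_of_pos hT]
  have hpos : 0 < ‖exp (I * ω * T) - 1‖ := norm_pos_iff.mpr (sub_ne_zero.mpr hω)
  rw [div_mul_eq_mul_div, le_div_iff₀ hpos]
  linarith

/-- Poincaré-type estimate on the circle for the off-diagonal components: if
`e^{2πiω} ≠ 1` and `u : ℝ → ℂ` is continuously differentiable and `2π`-periodic, then
`|u(t)| ≤ (2π/|e^{2πiω} - 1|) · sup_{s ∈ [0,2π]} |u'(s) + iω u(s)|` for every `t`. -/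
theorem poincare_estimate_twisted
    (ω : ℝ) (hω : Complex.exp (2 * Real.pi * Complex.I * ω) ≠ 1)
    (u : ℝ → ℂ) (hu : ContDiff ℝ 1 u) (hper : Function.Periodic u (2 * Real.pi)) :
    ∀ t : ℝ,
      ‖u t‖ ≤ (2 * Real.pi / ‖Complex.exp (2 * Real.pi * Complex.I * ω) - 1‖) *
        ⨆ s : Set.Icc (0:ℝ) (2 * Real.pi), ‖deriv u s.1 + Complex.I * ω * u s.1‖ := by
  have hexp : exp (I * ω * ↑(2 * Real.pi)) = exp (2 * Real.pi * I * ω) := by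
    push_cast
    ring_nf
  rw [← hexp] at hω ⊢
  exact norm_le_div_mul_iSup_norm_deriv_add_I_mul (by positivity) hω hu hper
end

section
/- Let p₁, …, pₙ ∈ ℝ³ be distinct points, a₁, …, aₙ ∈ ℝ³ vectors and ψ₁, …, ψₙ ∈ ℝ scalars. Suppose that for every x ∈ ℝ³∖{p₁,…,pₙ}: Σ_{j=1}^{n} (ψ_j·(x − p_j) − a_j × (x − p_j))/|x − p_j|³ = 0 and Σ_{j=1}^{n} a_j·(x − p_j)/|x − p_j|³ = 0, where × and · denote the cross and dot products of ℝ³. Then a_j = 0 and ψ_j = 0 for every j = 1, …, n. -/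
/-!
Blow up at a singular point `p k`: each Coulomb term is homogeneous of degree `-2`, so along
`x = p k + t • v`, `t > 0`, the `k`-th term multiplied by `t ^ 2` is constantly the `k`-th term
at `v`, while the other terms stay bounded and are killed by `t ^ 2 → 0` as `t → 0⁺`. Hence `ψ k • v = a k ⨯₃ v`
for every `v ≠ 0`, and testing this on two coordinate vectors forces `ψ k = 0` and `a k = 0`.
-/

noncomputable section

/-- The Euclidean norm of a vector in `ℝ³` (realised as `Fin 3 → ℝ`). -/
def enorm3 (y : Fin 3 → ℝ) : ℝ := Real.sqrt (∑ i, y i ^ 2)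

/-- The dot product on `ℝ³`. -/
def dot3 (y z : Fin 3 → ℝ) : ℝ := ∑ i, y i * z i

open Filter Topology Matrix

theorem apply_eq_zero_of_sum_apply_sub_eq_zero {ι E F : Type*} [Fintype ι]
    [NormedAddCommGroup E] [NormedSpace ℝ E] [NormedAddCommGroup F] [NormedSpace ℝ F]
    {p : ι → E} (hp : Function.Injective p) {K : ι → E → F} {m : ℕ} (hm : m ≠ 0)
    (hK_hom : ∀ j v, ∀ t : ℝ, 0 < t → t ^ m • K j (t • v) = K j v)
    (hK_cont : ∀ j y, y ≠ 0 → ContinuousAt (K j) y)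
    (h : ∀ x, (∀ j, x ≠ p j) → ∑ j, K j (x - p j) = 0) (k : ι) {v : E} (hv : v ≠ 0) :
    K k v = 0 := by
  classical
  have hx : Continuous fun t : ℝ => p k + t • v := by fun_prop
  have hoff : ∀ᶠ t in 𝓝[>] (0 : ℝ), ∀ j, p k + t • v ≠ p j := by
    refine eventually_all.2 fun j => ?_
    obtain rfl | hjk := eq_or_ne j k
    · filter_upwards [self_mem_nhdsWithin] with t (ht : 0 < t)
      simpa [ht.ne'] using hv
    · exact (hx.continuousAt.eventually_ne (by simpa using hp.ne hjk.symm)).filter_mono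
        nhdsWithin_le_nhds
  have hterm : ∀ j, Tendsto (fun t : ℝ => t ^ m • K j (p k + t • v - p j)) (𝓝[>] 0)
      (𝓝 (if j = k then K k v else 0)) := by
    intro j
    obtain rfl | hjk := eq_or_ne j k
    · refine tendsto_const_nhds.congr' ?_
      filter_upwards [self_mem_nhdsWithin] with t (ht : 0 < t)
      simp [hK_hom j v t ht]
    · have hcont : ContinuousAt (fun t : ℝ => K j (p k + t • v - p j)) 0 :=
        (hK_cont j (p k - p j) (sub_ne_zero.2 (hp.ne hjk.symm))).comp_of_eq
          (hx.sub continuous_const).continuousAt (by simp)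
      have hpow : Tendsto (fun t : ℝ => t ^ m) (𝓝 0) (𝓝 0) := by
        simpa [zero_pow hm] using (continuous_pow m).tendsto (0 : ℝ)
      simpa [hjk] using (hpow.smul hcont.tendsto).mono_left nhdsWithin_le_nhds
  have hsum := tendsto_finsetSum Finset.univ fun j _ => hterm j
  simp only [Finset.sum_ite_eq', Finset.mem_univ, if_true, ← Finset.smul_sum] at hsum
  refine tendsto_nhds_unique hsum (tendsto_const_nhds.congr' ?_)
  filter_upwards [hoff] with t ht
  rw [h _ ht, smul_zero]

theorem enorm3_eq_norm_toLp (y : Fin 3 → ℝ) : enorm3 y = ‖WithLp.toLp 2 y‖ := by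
  simp [enorm3, EuclideanSpace.norm_eq]

theorem enorm3_pos {y : Fin 3 → ℝ} (hy : y ≠ 0) : 0 < enorm3 y := by
  rw [enorm3_eq_norm_toLp]
  simpa using hy

theorem continuous_enorm3 : Continuous enorm3 := by
  simp_rw [funext enorm3_eq_norm_toLp]
  fun_prop

theorem enorm3_smul {t : ℝ} (ht : 0 ≤ t) (y : Fin 3 → ℝ) : enorm3 (t • y) = t * enorm3 y := by
  simp [enorm3_eq_norm_toLp, WithLp.toLp_smul, norm_smul, abs_of_nonneg ht]

def coulombField (ψ : ℝ) (a y : Fin 3 → ℝ) : Fin 3 → ℝ :=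
  (enorm3 y ^ 3)⁻¹ • (ψ • y - a ⨯₃ y)

theorem sq_smul_coulombField_smul (ψ : ℝ) (a y : Fin 3 → ℝ) {t : ℝ} (ht : 0 < t) :
    t ^ 2 • coulombField ψ a (t • y) = coulombField ψ a y := by
  have : ψ • t • y - a ⨯₃ (t • y) = t • (ψ • y - a ⨯₃ y) := by
    rw [map_smul, smul_sub, smul_comm t ψ]
  rw [coulombField, coulombField, enorm3_smul ht.le, this, smul_smul, smul_smul, mul_pow]
  congr 1
  field_simp

theorem continuousAt_coulombField (ψ : ℝ) (a : Fin 3 → ℝ) {y : Fin 3 → ℝ} (hy : y ≠ 0) :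
    ContinuousAt (coulombField ψ a) y := by
  have hcross : Continuous (a ⨯₃ ·) := LinearMap.continuous_of_finiteDimensional _
  exact ((continuous_enorm3.continuousAt.pow 3).inv₀ (pow_ne_zero 3 (enorm3_pos hy).ne')).smul
    (by fun_prop)

theorem coulombField_eq_zero_iff (ψ : ℝ) (a : Fin 3 → ℝ) {y : Fin 3 → ℝ} (hy : y ≠ 0) :
    coulombField ψ a y = 0 ↔ ψ • y = a ⨯₃ y := by
  rw [coulombField, smul_eq_zero_iff_right (by positivity [enorm3_pos hy]), sub_eq_zero]

theorem eq_zero_of_forall_smul_eq_cross {ψ : ℝ} {a : Fin 3 → ℝ}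
    (h : ∀ y : Fin 3 → ℝ, y ≠ 0 → ψ • y = a ⨯₃ y) : a = 0 ∧ ψ = 0 := by
  have h₀ := h ![1, 0, 0] (by simp)
  have h₁ := h ![0, 1, 0] (by simp)
  rw [cross_apply] at h₀ h₁
  have h₀₀ := congrFun h₀ 0
  have h₀₁ := congrFun h₀ 1
  have h₀₂ := congrFun h₀ 2
  have h₁₂ := congrFun h₁ 2
  simp only [Fin.isValue, Pi.smul_apply, cons_val_zero, smul_eq_mul, mul_one, cons_val, mul_zero,
    cons_val_one, sub_self, sub_zero, zero_sub, zero_eq_neg] at h₀₀ h₀₁ h₀₂ h₁₂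
  refine ⟨?_, h₀₀⟩
  ext i
  fin_cases i <;> simp <;> linarith

theorem coulomb_field_rigidity_general {n : ℕ} (p : Fin n → (Fin 3 → ℝ))
    (hp : Function.Injective p) (a : Fin n → (Fin 3 → ℝ)) (ψ : Fin n → ℝ)
    (h1 : ∀ x : Fin 3 → ℝ, (∀ j, x ≠ p j) →
      ∑ j, (enorm3 (x - p j) ^ 3)⁻¹ • (ψ j • (x - p j) - crossProduct (a j) (x - p j))
        = 0) :
    ∀ j, a j = 0 ∧ ψ j = 0 := by
  intro k
  refine eq_zero_of_forall_smul_eq_cross fun v hv => (coulombField_eq_zero_iff _ _ hv).1 ?_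
  exact apply_eq_zero_of_sum_apply_sub_eq_zero hp two_ne_zero
    (fun j v _ ht => sq_smul_coulombField_smul (ψ j) (a j) v ht)
    (fun j _ hy => continuousAt_coulombField (ψ j) (a j) hy) h1 k hv

/-- Rigidity of Coulomb-type fields: if the pair of equations
`Σ_j (ψ_j (x - p_j) - a_j × (x - p_j))/|x - p_j|³ = 0` and
`Σ_j a_j · (x - p_j)/|x - p_j|³ = 0` hold for every `x ∈ ℝ³ ∖ {p₁,…,pₙ}`, with
`p₁, …, pₙ` distinct, then all the vectors `a_j` and scalars `ψ_j` vanish. -/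
theorem coulomb_field_rigidity {n : ℕ} (p : Fin n → (Fin 3 → ℝ))
    (hp : Function.Injective p) (a : Fin n → (Fin 3 → ℝ)) (ψ : Fin n → ℝ)
    (h1 : ∀ x : Fin 3 → ℝ, (∀ j, x ≠ p j) →
      ∑ j, (enorm3 (x - p j) ^ 3)⁻¹ • (ψ j • (x - p j) - crossProduct (a j) (x - p j))
        = 0)
    (h2 : ∀ x : Fin 3 → ℝ, (∀ j, x ≠ p j) →
      ∑ j, dot3 (a j) (x - p j) / enorm3 (x - p j) ^ 3 = 0) :
    ∀ j, a j = 0 ∧ ψ j = 0 :=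
  coulomb_field_rigidity_general p hp a ψ h1

end
end
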